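/- arXiv:1809.05117 — 4 statements merged into one kernel-verified Lean document; each statement's English description precedes it below -/
import Mathlib

section
/- A subset C of F_3^n is a 2-cap if and only if it is a Sidon set, i.e., whenever a + b = c + d with a, b, c, d ∈ C, the pair (a,b) is a permutation of the pair (c,d). -/
/-! Over `ZMod 3` every nonzero weight is `±1`, so a vanishing affine combination of at most four
distinct points is a relation `∑ P = ∑ M` between disjoint sets with `#P ≡ #M (mod 3)`. Up to sign
it reads `x = y`, `a + b = c + d` or `a + b + c = 0`, that is `a + b = c + c`, and each of these
is excluded by the Sidon property. Conversely, a nontrivial relation `a + b = c + d` is an affine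
dependency `a + b - c - d = 0` among at most four points, whose weight at `a` is `1` or `2`. -/

def IsCap (d : ℕ) {n : ℕ} (C : Set (Fin n → ZMod 3)) : Prop :=
  ∀ s : Finset (Fin n → ZMod 3), ↑s ⊆ C → s.card ≤ d + 2 →
    AffineIndependent (ZMod 3) ((↑) : s → (Fin n → ZMod 3))

def IsSidon {G : Type*} [AddCommGroup G] (A : Set G) : Prop :=
  ∀ a ∈ A, ∀ b ∈ A, ∀ c ∈ A, ∀ d ∈ A, a + b = c + d →
    (a = c ∧ b = d) ∨ (a = d ∧ b = c)

open Finset Function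

lemma IsSidon.eq_or_eq_of_add_eq_add {G : Type*} [AddCommGroup G] {A : Set G} (hA : IsSidon A)
    {a b c d : G} (ha : a ∈ A) (hb : b ∈ A) (hc : c ∈ A) (hd : d ∈ A) (h : a + b = c + d) :
    a = c ∨ a = d :=
  (hA a ha b hb c hc d hd h).imp And.left And.left

lemma zmod3_eq_zero_or_one_or_neg_one : ∀ c : ZMod 3, c = 0 ∨ c = 1 ∨ c = -1 := by decide

section ZModThreeModule

variable {V ι : Type*} [AddCommGroup V] [Module (ZMod 3) V]

lemma neg_eq_add_self_of_zmod3 (x : V) : -x = x + x := by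
  rw [← two_smul (ZMod 3), show (2 : ZMod 3) = -1 from rfl, neg_one_smul]

lemma zmod3_smul_eq_ite_sub_ite (c : ZMod 3) (x : V) :
    c • x = (if c = 1 then x else 0) - (if c = -1 then x else 0) := by
  have : (1 : ZMod 3) ≠ -1 := by decide
  rcases zmod3_eq_zero_or_one_or_neg_one c with rfl | rfl | rfl <;> simp [this, this.symm]

lemma sum_zmod3_smul_eq_sum_filter_sub_sum_filter (t : Finset ι) (w : ι → ZMod 3) (v : ι → V) :
    ∑ i ∈ t, w i • v i = ∑ i ∈ t with w i = 1, v i - ∑ i ∈ t with w i = -1, v i := by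
  simp only [sum_filter, ← sum_sub_distrib, zmod3_smul_eq_ite_sub_ite]

variable {A : Set V} {p : ι → V}

lemma IsSidon.eq_empty_of_sum_eq_sum (hA : IsSidon A) (hp : Injective p) (hpA : ∀ i, p i ∈ A)
    {P M : Finset ι} (hPM : Disjoint P M) (hcard : #P + #M ≤ 4) (hmod : (#P : ZMod 3) = #M)
    (hsum : ∑ i ∈ P, p i = ∑ i ∈ M, p i) : P = ∅ ∧ M = ∅ := by
  classical
  wlog hMP : #M ≤ #P generalizing P M
  · exact (this hPM.symm (by omega) hmod.symm hsum.symm (by omega)).symm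
  rw [ZMod.natCast_eq_natCast_iff'] at hmod
  obtain h | h | h | h : (#P = 0 ∧ #M = 0) ∨ (#P = 1 ∧ #M = 1) ∨ (#P = 2 ∧ #M = 2) ∨
      (#P = 3 ∧ #M = 0) := by omega
  · exact ⟨card_eq_zero.1 h.1, card_eq_zero.1 h.2⟩
  · obtain ⟨⟨a, rfl⟩, ⟨b, rfl⟩⟩ := And.imp card_eq_one.1 card_eq_one.1 h
    simp only [sum_singleton] at hsum
    simp [hp hsum] at hPM
  · obtain ⟨⟨a, b, hab, rfl⟩, ⟨c, d, hcd, rfl⟩⟩ := And.imp card_eq_two.1 card_eq_two.1 h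
    rw [sum_pair hab, sum_pair hcd] at hsum
    rcases hA.eq_or_eq_of_add_eq_add (hpA a) (hpA b) (hpA c) (hpA d) hsum with h | h <;>
      simp [hp h] at hPM
  · obtain ⟨⟨a, b, c, hab, hac, hbc, rfl⟩, rfl⟩ := And.imp card_eq_three.1 card_eq_zero.1 h
    rw [sum_insert (by simp [hab, hac]), sum_pair hbc, sum_empty, ← add_assoc] at hsum
    have hpair : p a + p b = p c + p c := by
      rw [← neg_eq_add_self_of_zmod3, eq_neg_of_add_eq_zero_left hsum]
    obtain h | h := hA.eq_or_eq_of_add_eq_add (hpA a) (hpA b) (hpA c) (hpA c) hpair <;>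
      exact absurd (hp h) hac

theorem IsSidon.affineIndependent [Fintype ι] (hA : IsSidon A) (hp : Injective p)
    (hpA : ∀ i, p i ∈ A) (hι : Fintype.card ι ≤ 4) : AffineIndependent (ZMod 3) p := by
  classical
  rw [affineIndependent_iff]
  intro t w hw₀ hw₁ i hi
  set P := t.filter (w · = 1)
  set M := t.filter (w · = -1)
  have hsum : ∑ i ∈ P, p i = ∑ i ∈ M, p i := by
    rwa [sum_zmod3_smul_eq_sum_filter_sub_sum_filter, sub_eq_zero] at hw₁
  have hmod : (#P : ZMod 3) = #M := by
    rw [← sub_eq_zero, ← hw₀]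
    simpa using (sum_zmod3_smul_eq_sum_filter_sub_sum_filter t w (fun _ ↦ (1 : ZMod 3))).symm
  have hPM : Disjoint P M :=
    disjoint_filter.2 fun i _ h1 h2 ↦ absurd (h1.symm.trans h2) (by decide)
  have hcard : #P + #M ≤ 4 := by
    rw [← card_union_of_disjoint hPM]
    exact (card_le_univ _).trans hι
  obtain ⟨hP, hM⟩ := hA.eq_empty_of_sum_eq_sum hp hpA hPM hcard hmod hsum
  rcases zmod3_eq_zero_or_one_or_neg_one (w i) with h | h | h
  · exact h
  · have : i ∈ P := mem_filter.2 ⟨hi, h⟩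
    simp [hP] at this
  · have : i ∈ M := mem_filter.2 ⟨hi, h⟩
    simp [hM] at this

end ZModThreeModule

theorem isSidon_of_forall_affineIndependent {k V : Type*} [Ring k] [AddCommGroup V]
    [Module k V] {A : Set V} (h2 : (2 : k) ≠ 0)
    (hA : ∀ s : Finset V, ↑s ⊆ A → #s ≤ 4 → AffineIndependent k ((↑) : s → V)) :
    IsSidon A := by
  classical
  intro a ha b hb c hc d hd habcd
  by_cases hac : a = c
  · exact .inl ⟨hac, add_left_cancel (hac ▸ habcd)⟩
  by_cases had : a = d
  · exact .inr ⟨had, add_left_cancel (b := b) (c := c) (by rw [habcd, had, add_comm])⟩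
  exfalso
  set s : Finset V := {a, b, c, d}
  set w : V → k := fun x ↦ (if x = a then 1 else 0) + (if x = b then 1 else 0) -
    (if x = c then 1 else 0) - (if x = d then 1 else 0)
  have hsA : ↑s ⊆ A := by simp [s, Set.insert_subset_iff, ha, hb, hc, hd]
  have hw₀ : ∑ x ∈ s, w x = 0 := by
    simp [w, s, sum_add_distrib, sum_sub_distrib]
  have hw₁ : ∑ x ∈ s, w x • x = 0 := by
    simp [w, s, add_smul, sub_smul, ite_smul, sum_add_distrib, sum_sub_distrib, habcd]
  have hwa := (hA s hsA card_le_four).eq_zero_of_sum_eq_zero_subtype hw₀ hw₁ a (by simp [s])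
  rcases eq_or_ne a b with rfl | hab
  · simp only [w, ↓reduceIte, one_add_one_eq_two, hac, had, sub_zero] at hwa
    exact h2 hwa
  · simp only [w, ↓reduceIte, hab, hac, had, add_zero, sub_zero] at hwa
    exact h2 (by rw [← one_add_one_eq_two, hwa, add_zero])

/-- A subset of `F_3^n` is a `2`-cap iff it is a Sidon set. -/
theorem isCap_two_iff_isSidon {n : ℕ} (C : Set (Fin n → ZMod 3)) :
    IsCap 2 C ↔ IsSidon C :=
  ⟨fun hC ↦ isSidon_of_forall_affineIndependent (by decide) hC, fun hC s hsC hs ↦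
    hC.affineIndependent Subtype.val_injective (fun x ↦ hsC x.2) (by simpa using hs)⟩
end

section
/- If n is even, then the maximal size of a Sidon set (equivalently, 2-cap) in F_3^n equals 3^{n/2}. -/
/-!
A Sidon set `C` in a finite abelian group `G` has pairwise distinct nonzero differences `a - b`
(`a ≠ b`), so `|C| (|C| - 1) < |G|`; for `G = 𝔽₃^(2k)` this forces `|C| ≤ 3^k`. Conversely,
identifying `𝔽₃^(2k)` with `K × K` for the field `K = 𝔽_{3^k}`, the parabola `{(x, x²)}` is a
Sidon set: `a + b = c + d` and `a² + b² = c² + d²` give `ab = cd` (as `2` is invertible), so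
`{a, b} = {c, d}`.
-/

open Finset

lemma Nat.le_of_mul_sub_one_lt_mul_self {m t : ℕ} (h : m * (m - 1) < t * t) : m ≤ t := by
  by_contra! hlt
  have : (t + 1) * t ≤ m * (m - 1) := Nat.mul_le_mul hlt (by omega)
  nlinarith

section IsSidon

variable {G H : Type*} [AddCommGroup G] [AddCommGroup H]

lemma isSidon_singleton (a : G) : IsSidon ({a} : Set G) := by
  rintro _ rfl _ rfl _ rfl _ rfl -
  exact Or.inl ⟨rfl, rfl⟩

lemma IsSidon.image {A : Set G} (hA : IsSidon A) (f : G →+ H) (hf : Function.Injective f) :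
    IsSidon (f '' A) := by
  rintro _ ⟨a, ha, rfl⟩ _ ⟨b, hb, rfl⟩ _ ⟨c, hc, rfl⟩ _ ⟨d, hd, rfl⟩ h
  rw [← map_add, ← map_add] at h
  rcases hA a ha b hb c hc d hd (hf h) with ⟨rfl, rfl⟩ | ⟨rfl, rfl⟩
  · exact Or.inl ⟨rfl, rfl⟩
  · exact Or.inr ⟨rfl, rfl⟩

lemma IsSidon.injOn_sub_offDiag [DecidableEq G] {C : Finset G} (hC : IsSidon (C : Set G)) :
    Set.InjOn (fun p : G × G => p.1 - p.2) C.offDiag := by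
  intro p hp q hq hpq
  rw [Finset.mem_coe, Finset.mem_offDiag] at hp hq
  have hsum : p.1 + q.2 = q.1 + p.2 := sub_eq_sub_iff_add_eq_add.mp hpq
  rcases hC p.1 hp.1 q.2 hq.2.1 q.1 hq.1 p.2 hp.2.1 hsum with ⟨h1, h2⟩ | ⟨h1, -⟩
  · exact Prod.ext h1 h2.symm
  · exact absurd h1 hp.2.2

lemma IsSidon.card_mul_card_sub_one_lt [Fintype G] {C : Finset G} (hC : IsSidon (C : Set G)) :
    #C * (#C - 1) < Fintype.card G := by
  classical
  have hdiff : #C.offDiag ≤ #(univ.erase (0 : G)) :=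
    card_le_card_of_injOn _
      (fun p hp => mem_erase.mpr ⟨sub_ne_zero_of_ne (mem_offDiag.mp hp).2.2, mem_univ _⟩)
      hC.injOn_sub_offDiag
  rw [offDiag_card, card_erase_of_mem (mem_univ 0), card_univ, ← Nat.mul_sub_one] at hdiff
  have : 0 < Fintype.card G := Fintype.card_pos
  omega

end IsSidon

lemma isSidon_range_sq {K : Type*} [Field K] (h2 : (2 : K) ≠ 0) :
    IsSidon (Set.range fun x : K => (x, x * x)) := by
  rintro _ ⟨a, rfl⟩ _ ⟨b, rfl⟩ _ ⟨c, rfl⟩ _ ⟨d, rfl⟩ h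
  simp only [Prod.mk_add_mk, Prod.mk.injEq] at h ⊢
  obtain ⟨hsum, hsq⟩ := h
  have hprod : a * b = c * d :=
    mul_left_cancel₀ h2 (by linear_combination (a + b + c + d) * hsum - hsq)
  have hroots : (a - c) * (a - d) = 0 := by linear_combination a * hsum - hprod
  rcases mul_eq_zero.mp hroots with hac | had
  · obtain rfl : a = c := sub_eq_zero.mp hac
    obtain rfl : b = d := add_left_cancel hsum
    simp
  · obtain rfl : a = d := sub_eq_zero.mp had
    obtain rfl : b = c := by linear_combination hsum
    simp

lemma exists_isSidon_card_eq_pow (p : ℕ) [Fact p.Prime] (hp : p ≠ 2) (k : ℕ) :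
    ∃ C : Finset (Fin (k + k) → ZMod p), IsSidon (C : Set (Fin (k + k) → ZMod p)) ∧
      #C = p ^ k := by
  classical
  rcases eq_or_ne k 0 with rfl | hk
  · exact ⟨{0}, by simpa using isSidon_singleton _, by simp⟩
  let K := GaloisField p k
  have : Fintype K := Fintype.ofFinite K
  have hdim :
      Module.finrank (ZMod p) (K × K) = Module.finrank (ZMod p) (Fin (k + k) → ZMod p) := by
    rw [Module.finrank_prod, GaloisField.finrank p hk, Module.finrank_fin_fun]
  obtain ⟨e⟩ := FiniteDimensional.nonempty_linearEquiv_of_finrank_eq hdim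
  have h2 : (2 : K) ≠ 0 := Ring.two_ne_zero (by rwa [ringChar.eq K p])
  have hgraph : Function.Injective fun x : K => (x, x * x) := fun x y hxy => congrArg Prod.fst hxy
  refine ⟨univ.image (e ∘ fun x : K => (x, x * x)), ?_, ?_⟩
  · rw [coe_image, coe_univ, Set.image_univ, Set.range_comp]
    exact (isSidon_range_sq h2).image e.toAddMonoidHom e.injective
  · rw [card_image_of_injective _ (e.injective.comp hgraph), card_univ, ← Nat.card_eq_fintype_card,
      GaloisField.card p k hk]

/-- If `n` is even, the maximal size of a Sidon set (equivalently, 2-cap) in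
`F_3^n` is `3^(n/2)`. -/
theorem max_sidon_card_even (n : ℕ) (hn : Even n) :
    IsGreatest {k : ℕ | ∃ C : Finset (Fin n → ZMod 3), IsSidon (C : Set (Fin n → ZMod 3)) ∧ C.card = k}
      (3 ^ (n / 2)) := by
  obtain ⟨k, rfl⟩ := hn
  have : Fact (Nat.Prime 3) := ⟨Nat.prime_three⟩
  rw [show (k + k) / 2 = k by omega]
  refine ⟨exists_isSidon_card_eq_pow 3 (by decide) k, ?_⟩
  rintro _ ⟨C, hC, rfl⟩
  have hbound := hC.card_mul_card_sub_one_lt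
  rw [Fintype.card_fun, ZMod.card, Fintype.card_fin, pow_add] at hbound
  exact Nat.le_of_mul_sub_one_lt_mul_self hbound
end

section
/- If n is even, then F_3^n can be partitioned into 3^{n/2} pairwise disjoint maximal Sidon sets (maximal 2-caps), each of size 3^{n/2}. -/
open Set Function

section SidonBound

variable {G : Type*} [AddCommGroup G]

theorem Set.Subsingleton.isSidon {A : Set G} (hA : A.Subsingleton) : IsSidon A :=
  fun _ ha _ hb _ hc _ hd _ => Or.inl ⟨hA ha hc, hA hb hd⟩

theorem IsSidon.preimage {H : Type*} [AddCommGroup H] {f : G →+ H} (hf : Injective f)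
    {A : Set H} (hA : IsSidon A) : IsSidon (f ⁻¹' A) := by
  intro a ha b hb c hc d hd h
  exact (hA _ ha _ hb _ hc _ hd (by simp only [← map_add, h])).imp
    (And.imp (hf ·) (hf ·)) (And.imp (hf ·) (hf ·))

theorem IsSidon.injOn_sub_offDiag_s10 {A : Set G} (hA : IsSidon A) :
    InjOn (fun p : G × G => p.1 - p.2) A.offDiag := by
  rintro ⟨a, b⟩ ⟨ha, hb, hab⟩ ⟨c, d⟩ ⟨hc, hd, -⟩ h
  rcases hA a ha d hd c hc b hb (sub_eq_sub_iff_add_eq_add.mp h) with ⟨rfl, rfl⟩ | ⟨rfl, -⟩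
  · rfl
  · exact absurd rfl hab

theorem IsSidon.ncard_mul_pred_lt [Finite G] {A : Set G} (hA : IsSidon A) :
    A.ncard * (A.ncard - 1) < Nat.card G := by
  classical
  have := Fintype.ofFinite G
  obtain ⟨s, rfl⟩ := A.toFinite.exists_finset_coe
  rw [ncard_coe_finset, Nat.card_eq_fintype_card, Nat.mul_sub_one, ← Finset.offDiag_card]
  calc s.offDiag.card ≤ (Finset.univ.erase (0 : G)).card := by
        refine Finset.card_le_card_of_injOn _ (fun p hp => ?_) (by simpa using hA.injOn_sub_offDiag_s10)
        simpa [sub_eq_zero] using (Finset.mem_offDiag.mp hp).2.2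
    _ < Fintype.card G := Finset.card_erase_lt_of_mem (Finset.mem_univ 0)

theorem IsSidon.ncard_le_of_card_eq_mul_self [Finite G] {A : Set G} (hA : IsSidon A) {q : ℕ}
    (hG : Nat.card G = q * q) : A.ncard ≤ q := by
  have := hA.ncard_mul_pred_lt
  by_contra! h
  have : q * q ≤ A.ncard * (A.ncard - 1) := Nat.mul_le_mul (by omega) (by omega)
  omega

end SidonBound

section Partition

def IsSidonPartition {ι G : Type*} [AddCommGroup G] (S : ι → Set G) (k : ℕ) : Prop :=
  Pairwise (Disjoint on S) ∧ ⋃ i, S i = univ ∧ ∀ i, IsSidon (S i) ∧ (S i).ncard = k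

variable {ι κ G H : Type*} [AddCommGroup G] [AddCommGroup H] {S : ι → Set H} {k : ℕ}

theorem IsSidonPartition.comp_equiv (hS : IsSidonPartition S k) (σ : κ ≃ ι) :
    IsSidonPartition (S ∘ σ) k :=
  ⟨hS.1.comp_of_injective σ.injective, by rw [← hS.2.1]; exact σ.surjective.iUnion_comp S,
    fun i => hS.2.2 (σ i)⟩

theorem IsSidonPartition.preimage (hS : IsSidonPartition S k) (e : G ≃+ H) :
    IsSidonPartition (fun i => e ⁻¹' S i) k := by
  obtain ⟨hdisj, hcover, hsidon⟩ := hS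
  refine ⟨fun i j hij => (hdisj hij).preimage e, by rw [← preimage_iUnion, hcover, preimage_univ],
    fun i => ⟨(hsidon i).1.preimage (f := e.toAddMonoidHom) e.injective, ?_⟩⟩
  rw [ncard_preimage_of_injective_subset_range e.injective (by simp), (hsidon i).2]

theorem isSidonPartition_univ [Unique ι] [Unique G] :
    IsSidonPartition (fun _ : ι => (univ : Set G)) 1 :=
  ⟨Subsingleton.pairwise, iUnion_const univ,
    fun _ => ⟨subsingleton_univ.isSidon, by simp⟩⟩

end Partition

section Parabola

variable {F : Type*} [Field F]

def parabola (a : F) : Set (F × F) := (fun p => p.2 - p.1 ^ 2) ⁻¹' {a}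

theorem parabola_eq_range (a : F) : parabola a = range fun x => (x, x ^ 2 + a) := by
  ext ⟨x, y⟩
  simp only [parabola, mem_preimage, mem_singleton_iff, mem_range, Prod.mk.injEq, exists_eq_left]
  rw [sub_eq_iff_eq_add', eq_comm]

theorem eq_and_eq_or_eq_and_eq_of_add_eq_add_of_sq_add_sq_eq (h2 : (2 : F) ≠ 0) {x y z w : F}
    (h1 : x + y = z + w) (hsq : x ^ 2 + y ^ 2 = z ^ 2 + w ^ 2) :
    (x = z ∧ y = w) ∨ (x = w ∧ y = z) := by
  have : 2 * ((z - x) * (z - y)) = 0 := by linear_combination (x + y - z + w) * h1 - hsq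
  rcases mul_eq_zero.mp ((mul_eq_zero.mp this).resolve_left h2) with h | h
  · exact Or.inl ⟨by linear_combination -h, by linear_combination h1 + h⟩
  · exact Or.inr ⟨by linear_combination h1 + h, by linear_combination -h⟩

theorem isSidon_parabola (h2 : (2 : F) ≠ 0) (a : F) : IsSidon (parabola a) := by
  rw [parabola_eq_range]
  rintro _ ⟨x, rfl⟩ _ ⟨y, rfl⟩ _ ⟨z, rfl⟩ _ ⟨w, rfl⟩ h
  simp only [Prod.ext_iff, Prod.fst_add, Prod.snd_add] at h
  rcases eq_and_eq_or_eq_and_eq_of_add_eq_add_of_sq_add_sq_eq h2 h.1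
    (by linear_combination h.2) with ⟨rfl, rfl⟩ | ⟨rfl, rfl⟩
  · exact Or.inl ⟨rfl, rfl⟩
  · exact Or.inr ⟨rfl, rfl⟩

theorem isSidonPartition_parabola (h2 : (2 : F) ≠ 0) :
    IsSidonPartition (parabola (F := F)) (Nat.card F) := by
  refine ⟨fun a b hab => Disjoint.preimage _ (disjoint_singleton.2 hab),
    eq_univ_of_forall fun p => mem_iUnion.2 ⟨_, rfl⟩, fun a => ⟨isSidon_parabola h2 a, ?_⟩⟩
  rw [parabola_eq_range, ncard_range_of_injective fun x y h => congrArg Prod.fst h]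

end Parabola

theorem exists_isSidonPartition_zmod_three (m : ℕ) :
    ∃ S : Fin (3 ^ m) → Set (Fin (m + m) → ZMod 3), IsSidonPartition S (3 ^ m) := by
  -- no field has one element, so the one-point space `𝔽₃⁰` is handled apart
  rcases eq_or_ne m 0 with rfl | hm
  · exact ⟨_, isSidonPartition_univ (ι := Fin 1) (G := Fin 0 → ZMod 3)⟩
  have : Fact (Nat.Prime 3) := ⟨Nat.prime_three⟩
  let F := GaloisField 3 m
  have hcard : Nat.card F = 3 ^ m := GaloisField.card 3 m hm
  have h2 : (2 : F) ≠ 0 := by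
    simpa using (CharP.cast_eq_zero_iff F 3 2).not.mpr (by norm_num)
  obtain ⟨e⟩ := FiniteDimensional.nonempty_linearEquiv_of_finrank_eq (R := ZMod 3)
    (M := Fin (m + m) → ZMod 3) (M' := F × F) (by simp [F, GaloisField.finrank 3 hm])
  exact ⟨_, ((hcard ▸ isSidonPartition_parabola h2).preimage e.toAddEquiv).comp_equiv
    (Finite.equivFinOfCardEq hcard).symm⟩

/-- If `n` is even, `F_3^n` can be partitioned into `3^(n/2)` pairwise disjoint
maximal Sidon sets, each of size `3^(n/2)`. -/
theorem partition_into_maximal_sidon (n : ℕ) (hn : Even n) :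
    ∃ S : Fin (3 ^ (n / 2)) → Set (Fin n → ZMod 3),
      Pairwise (fun i j => Disjoint (S i) (S j)) ∧
      (⋃ i, S i) = Set.univ ∧
      ∀ i, IsSidon (S i) ∧ (S i).ncard = 3 ^ (n / 2) ∧
        ∀ T : Set (Fin n → ZMod 3), IsSidon T → T.ncard ≤ (S i).ncard := by
  obtain ⟨m, rfl⟩ := hn
  rw [show (m + m) / 2 = m by omega]
  have hcard : Nat.card (Fin (m + m) → ZMod 3) = 3 ^ m * 3 ^ m := by simp [pow_add]
  obtain ⟨S, hdisj, hcover, hS⟩ := exists_isSidonPartition_zmod_three m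
  exact ⟨S, hdisj, hcover, fun i => ⟨(hS i).1, (hS i).2, fun T hT =>
    (hS i).2 ▸ hT.ncard_le_of_card_eq_mul_self hcard⟩⟩
end

section
/- If {a, b, c, d} is a 2-cap of size four in F_3^n, then {a, b, c, d, a+b+c+d} is a 2-cap of size five. -/
/-!
Over `ZMod 3` the weights `1, 1, 1, 1` sum to `1`, so `a + b + c + d` is an affine combination
of `a, b, c, d` in which every point has a nonzero weight. By the exchange property of affine
independence it can therefore replace any one of the four points. A set of at most four of the
five points either avoids `a + b + c + d`, or misses one of `a, b, c, d` and so lies in such an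
exchanged quadruple.
-/

open Function Set

theorem AffineIndependent.update_affineCombination {k V P ι : Type*} [DivisionRing k]
    [AddCommGroup V] [Module k V] [AddTorsor V P] [DecidableEq ι] {p : ι → P}
    (hp : AffineIndependent k p) {s : Finset ι} {w : ι → k} (hw : ∑ j ∈ s, w j = 1) {i : ι}
    (hi : i ∈ s) (hwi : w i ≠ 0) :
    AffineIndependent k (update p i (s.affineCombination k p w)) :=
  hp.affineIndependent_update_of_notMem_affineSpan fun h =>
    hwi (hp.eq_zero_of_affineCombination_mem_affineSpan hw h hi (by simp))

theorem Set.injective_of_ncard_range_eq {α ι : Type*} [Finite ι] {f : ι → α}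
    (h : (range f).ncard = Nat.card ι) : Injective f := by
  rw [← image_univ, ← ncard_univ] at h
  exact injOn_univ.1 (injOn_of_ncard_image_eq h)

theorem IsCap.affineIndependent {d n : ℕ} {ι : Type*} [Fintype ι] {p : ι → Fin n → ZMod 3}
    (h : IsCap d (range p)) (hp : Injective p) (hcard : Fintype.card ι ≤ d + 2) :
    AffineIndependent (ZMod 3) p := by
  classical
  have := h (Finset.univ.image p) (by simp) (Finset.card_image_le.trans hcard)
  exact AffineIndependent.of_set_of_injective (this.mono (by simp)) hp

section SumOfPoints

variable {k V ι : Type*} [DivisionRing k] [AddCommGroup V] [Module k V] [Fintype ι]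
  {p : ι → V}

theorem AffineIndependent.update_sum [DecidableEq ι] (hp : AffineIndependent k p)
    (hι : (Fintype.card ι : k) = 1) (i : ι) : AffineIndependent k (update p i (∑ j, p j)) := by
  have hw : ∑ j, (1 : ι → k) j = 1 := by simpa using hι
  have hsum : ∑ j, p j = Finset.univ.affineCombination k p 1 := by
    simp [Finset.affineCombination_eq_linear_combination _ _ _ hw]
  exact hsum ▸ hp.update_affineCombination hw (Finset.mem_univ i) one_ne_zero

theorem AffineIndependent.sum_notMem_range (hp : AffineIndependent k p)
    (hι : (Fintype.card ι : k) = 1) (hι₂ : 1 < Fintype.card ι) : ∑ j, p j ∉ range p := by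
  classical
  rintro ⟨j, hj⟩
  have : Nontrivial ι := Fintype.one_lt_card_iff_nontrivial.1 hι₂
  obtain ⟨i, hij⟩ := exists_ne j
  refine hij ((hp.update_sum hι i).injective ?_)
  rw [update_self, update_of_ne hij.symm, hj]

theorem AffineIndependent.ncard_insert_sum_range (hp : AffineIndependent k p)
    (hι : (Fintype.card ι : k) = 1) (hι₂ : 1 < Fintype.card ι) :
    (insert (∑ j, p j) (range p)).ncard = Fintype.card ι + 1 := by
  rw [ncard_insert_of_notMem (hp.sum_notMem_range hι hι₂),
    ncard_range_of_injective hp.injective, Nat.card_eq_fintype_card]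

end SumOfPoints

theorem isCap_insert_sum {d n : ℕ} {ι : Type*} [Fintype ι] {p : ι → Fin n → ZMod 3}
    (hp : AffineIndependent (ZMod 3) p) (hι : (Fintype.card ι : ZMod 3) = 1)
    (hd : d + 2 ≤ Fintype.card ι) : IsCap d (insert (∑ i, p i) (range p)) := by
  classical
  intro s hs hcard
  by_cases he : ∑ i, p i ∈ s
  · obtain ⟨i, hi⟩ : ∃ i, p i ∉ s := by
      by_contra! hall
      have hsub : insert (∑ i, p i) (Finset.univ.image p) ⊆ s :=
        Finset.insert_subset he (by simpa [Finset.image_subset_iff] using hall)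
      have := Finset.card_le_card hsub
      rw [Finset.card_insert_of_notMem (by simpa using hp.sum_notMem_range hι (by omega)),
        Finset.card_image_of_injective _ hp.injective, Finset.card_univ] at this
      omega
    refine (hp.update_sum hι i).range.mono fun x hx => ?_
    rcases hs hx with rfl | ⟨j, rfl⟩
    · exact ⟨i, update_self ..⟩
    · exact ⟨j, update_of_ne (by rintro rfl; exact hi hx) ..⟩
  · exact hp.range.mono fun x hx => (hs hx).resolve_left (ne_of_mem_of_not_mem hx he)

/-- If `{a,b,c,d}` is a 2-cap of size four in `F_3^n`, then
`{a,b,c,d,a+b+c+d}` is a 2-cap of size five. -/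
theorem cap_extend {n : ℕ} (a b c d : Fin n → ZMod 3)
    (hcard : ({a, b, c, d} : Set (Fin n → ZMod 3)).ncard = 4)
    (hcap : IsCap 2 ({a, b, c, d} : Set (Fin n → ZMod 3))) :
    IsCap 2 ({a, b, c, d, a + b + c + d} : Set (Fin n → ZMod 3)) ∧
      ({a, b, c, d, a + b + c + d} : Set (Fin n → ZMod 3)).ncard = 5 := by
  set p := ![a, b, c, d]
  have hrange : range p = {a, b, c, d} := by ext; simp [p, Matrix.range_cons, or_comm, or_left_comm]
  have hι : (Fintype.card (Fin 4) : ZMod 3) = 1 := by decide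
  have hp : AffineIndependent (ZMod 3) p :=
    IsCap.affineIndependent (hrange ▸ hcap)
      (injective_of_ncard_range_eq (by rw [hrange, hcard, Nat.card_fin])) le_rfl
  have hset : ({a, b, c, d, a + b + c + d} : Set (Fin n → ZMod 3)) =
      insert (∑ i, p i) (range p) := by
    rw [hrange, show ∑ i, p i = a + b + c + d by simp [p, Fin.sum_univ_four]]
    ext; simp only [mem_insert_iff, mem_singleton_iff]; tauto
  rw [hset]
  exact ⟨isCap_insert_sum hp hι le_rfl, hp.ncard_insert_sum_range hι (by decide)⟩
end
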